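/- Fix an integer m ≥ 1 and let k ≥ 0, t ≥ 1 be integers with k + t < 2^m. Assume the matrix A_{k,t} is invertible over 𝔽₂. Then c_{k+t,t} · (A_{k,t})^{−1} = ξ_t over 𝔽₂; in particular, the row vector c_{k+t,t} · (A_{k,t})^{−1} does not depend on k. -/

import Mathlib

/-!
Modulo 2 the signs in the forward-difference formula disappear, so
`Δ^t C(·, j) (k + j) = ∑_{i ≤ t} C(t, i) C(k + i + j, j)`. For `j < t` the left side vanishes
because `C(x, j)` has degree `j` in `x`, and moving the term `i = t` across gives
`ξ_t · A_{k,t} = c_{k+t,t}`. Multiplying on the right by `A_{k,t}⁻¹` yields the claim.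
-/

open Finset

lemma fwdDiff_iter_choose_eq_zero_of_lt {j t : ℕ} (h : j < t) :
    (fwdDiff 1)^[t] (fun x ↦ x.choose j : ℕ → ℤ) = 0 := by
  obtain ⟨r, rfl⟩ := Nat.exists_eq_add_of_lt h
  have hconst : (fwdDiff 1)^[j] (fun x ↦ x.choose j : ℕ → ℤ) = fun _ ↦ 1 := by
    simpa using fwdDiff_iter_choose 0 j
  rw [show j + r + 1 = r + (1 + j) by ring, Function.iterate_add_apply,
    Function.iterate_add_apply, hconst, Function.iterate_one, fwdDiff_const]
  exact Function.iterate_fixed (by simp) r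

lemma sum_choose_mul_choose_add_zmod_two {j t : ℕ} (h : j < t) (k : ℕ) :
    ∑ i ∈ range t, (t.choose i : ZMod 2) * ((k + i + j).choose j : ZMod 2)
      = ((k + t + j).choose j : ZMod 2) := by
  have hΔ := congr_arg (Int.cast : ℤ → ZMod 2)
    (congr_fun (fwdDiff_iter_choose_eq_zero_of_lt h) (k + j))
  rw [fwdDiff_iter_eq_sum_shift] at hΔ
  push_cast [CharTwo.neg_eq, one_pow, one_mul, mul_one, smul_eq_mul, Pi.zero_apply] at hΔ
  rw [sum_range_succ, Nat.choose_self, Nat.cast_one, one_mul, add_eq_zero_iff_eq_neg,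
    CharTwo.neg_eq] at hΔ
  simpa only [add_right_comm k j] using hΔ

lemma vecMul_choose_pascal_zmod_two (k t : ℕ) :
    Matrix.vecMul (fun j : Fin t => (t.choose j : ZMod 2))
      (Matrix.of fun i j : Fin t => ((k + i + j).choose j : ZMod 2))
      = fun j : Fin t => ((k + t + j).choose j : ZMod 2) := by
  funext j
  simp only [Matrix.vecMul, dotProduct, Matrix.of_apply]
  rw [Fin.sum_univ_eq_sum_range (fun i => (t.choose i : ZMod 2) * ((k + i + j).choose j : ZMod 2))]
  exact sum_choose_mul_choose_add_zmod_two j.2 k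

theorem c_vecMul_A_inv_eq_xi_general (k t : ℕ)
    (hA : IsUnit (Matrix.of fun i j : Fin t =>
      ((Nat.choose (k + i.1 + j.1) j.1 : ℕ) : ZMod 2)).det) :
    Matrix.vecMul (fun j : Fin t => ((Nat.choose (k + t + j.1) j.1 : ℕ) : ZMod 2))
      (Matrix.of fun i j : Fin t => ((Nat.choose (k + i.1 + j.1) j.1 : ℕ) : ZMod 2))⁻¹
      = fun j : Fin t => ((Nat.choose t j.1 : ℕ) : ZMod 2) := by
  rw [← vecMul_choose_pascal_zmod_two k t, Matrix.vecMul_vecMul, Matrix.mul_nonsing_inv _ hA,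
    Matrix.vecMul_one]

/-- For `m ≥ 1`, `k ≥ 0`, `t ≥ 1` with `k + t < 2^m`, if the matrix
`A_{k,t} = (binom(k+i+j, j) mod 2)_{0≤i,j<t}` is invertible over `𝔽₂`, then
`c_{k+t,t} · (A_{k,t})⁻¹ = ξ_t`, where `c_{k+t,t} = (binom(k+t+j, j) mod 2)_{0≤j<t}`
and `ξ_t = (binom(t,j) mod 2)_{0≤j<t}`; in particular this row vector does not
depend on `k`. -/
theorem c_vecMul_A_inv_eq_xi (m k t : ℕ) (hm : 1 ≤ m) (ht : 1 ≤ t) (hkt : k + t < 2 ^ m)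
    (hA : IsUnit (Matrix.of fun i j : Fin t =>
      ((Nat.choose (k + i.1 + j.1) j.1 : ℕ) : ZMod 2)).det) :
    Matrix.vecMul (fun j : Fin t => ((Nat.choose (k + t + j.1) j.1 : ℕ) : ZMod 2))
      (Matrix.of fun i j : Fin t => ((Nat.choose (k + i.1 + j.1) j.1 : ℕ) : ZMod 2))⁻¹
      = fun j : Fin t => ((Nat.choose t j.1 : ℕ) : ZMod 2) :=
  c_vecMul_A_inv_eq_xi_general k t hA
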